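/- Let k ≥ 1 and m ≥ 0 be fixed integers and c ∈ ℝ. In the random clique complex model, let R*_{k−1,m}(t) be the number of k-element subsets σ of [n] such that for some s ∈ [t,1], σ is a clique of G(n,s) and the number of vertices v ∈ [n] ∖ σ with σ ∪ {v} a clique of G(n,s) is at most m. Then lim_{n→∞} E[R*_{k−1,m}(t_c(k,n))] = 0. -/

import Mathlib

/-!
A `k`-set `σ` counted by `R*_{k-1,m}(t)` is a clique of `G(n,s)` for some `s ≥ t` with at most
`m` common neighbours there, so it has at most `m` common neighbours in `G(n,t)` as well: some
`n - k - m` of the outside vertices are not joined to all of `σ` at time `t`. For distinct outside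
vertices these events involve disjoint sets of edges, hence are independent, and each has
probability `1 - t^k`. A union bound over `σ` and over these vertex sets gives
`E R* ≤ C(n,k) C(n-k,m) (1 - t^k)^(n-k-m) ≤ n^(k+m) exp(-(n-k-m) t^k)`. Since
`t_c ≥ n^(-1/(k+1))`, the exponent is at least `n^(1/(k+1))/2`, which beats the polynomial factor.
-/

open MeasureTheory

/-- Index type: unordered pairs of distinct elements of `Fin n`. -/
abbrev EdgeIdx (n : ℕ) := {e : Sym2 (Fin n) // ¬ e.IsDiag}

noncomputable instance (n : ℕ) : Fintype (EdgeIdx n) := Fintype.ofFinite _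

/-- Uniform probability measure on `[0,1]`. -/
noncomputable def unif : Measure ℝ := volume.restrict (Set.Icc 0 1)

/-- The product measure: i.i.d. Uniform[0,1] edge weights. -/
noncomputable def Pn (n : ℕ) : Measure (EdgeIdx n → ℝ) := Measure.pi fun _ => unif

/-- The weight of the pair `{i,j}` (defined to be `0` if `i = j`, a junk value never used). -/
noncomputable def eV {n : ℕ} (ω : EdgeIdx n → ℝ) (i j : Fin n) : ℝ :=
  if h : i = j then 0 else ω ⟨s(i, j), by simp [Sym2.mk_isDiag_iff, h]⟩

/-- `σ` is a clique of `G(n,t)`: every pair of distinct elements of `σ` is an edge. -/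
def IsClique {n : ℕ} (ω : EdgeIdx n → ℝ) (t : ℝ) (σ : Finset (Fin n)) : Prop :=
  ∀ i ∈ σ, ∀ j ∈ σ, i ≠ j → eV ω i j ≤ t

/-- `σ` is a maximal `(k+1)`-element clique of `G(n,t)`. -/
def IsMaxClique {n : ℕ} (k : ℕ) (ω : EdgeIdx n → ℝ) (t : ℝ) (σ : Finset (Fin n)) : Prop :=
  σ.card = k + 1 ∧ IsClique ω t σ ∧ ∀ p, p ∉ σ → ∃ i ∈ σ, t < eV ω p i

/-- `N_k(t)`: the number of maximal `(k+1)`-element cliques of `G(n,t)`. -/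
noncomputable def Nk {n : ℕ} (k : ℕ) (t : ℝ) (ω : EdgeIdx n → ℝ) : ℕ :=
  Nat.card {σ : Finset (Fin n) // IsMaxClique k ω t σ}

/-- `N*_k(t)`: the number of `(k+1)`-element subsets that are maximal cliques
of `G(n,s)` for some `s ∈ [t,1]`. -/
noncomputable def NkStar {n : ℕ} (k : ℕ) (t : ℝ) (ω : EdgeIdx n → ℝ) : ℕ :=
  Nat.card {σ : Finset (Fin n) // ∃ s, t ≤ s ∧ s ≤ 1 ∧ IsMaxClique k ω s σ}

/-- The critical window time `t_c(k,n)`. -/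
noncomputable def tc (k : ℕ) (c : ℝ) (n : ℕ) : ℝ :=
  ((((k : ℝ) / 2 + 1) * Real.log n + ((k : ℝ) / 2) * Real.log (Real.log n) + c) / n)
    ^ ((1 : ℝ) / (k + 1))

/-- `μ(k,c) = ((k/2+1)^(k/2)/(k+1)!) e^{-c}`. -/
noncomputable def muk (k : ℕ) (c : ℝ) : ℝ :=
  (((k : ℝ) / 2 + 1) ^ ((k : ℝ) / 2) / (Nat.factorial (k + 1))) * Real.exp (-c)

/-- `R*_{k−1,m}(t)`: the number of `k`-element subsets `σ` of `[n]` such that, for some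
`s ∈ [t,1]`, `σ` is a clique of `G(n,s)` and the number of vertices `v ∉ σ` with
`σ ∪ {v}` a clique of `G(n,s)` is at most `m`. -/
noncomputable def RStar {n : ℕ} (k m : ℕ) (t : ℝ) (ω : EdgeIdx n → ℝ) : ℕ :=
  Nat.card {σ : Finset (Fin n) // σ.card = k ∧
    ∃ s, t ≤ s ∧ s ≤ 1 ∧ IsClique ω s σ ∧
      Nat.card {v : Fin n // v ∉ σ ∧ IsClique ω s (insert v σ)} ≤ m}

section ProductMeasure

open Set

variable {ι : Type*} [Fintype ι] {X : ι → Type*} [∀ i, MeasurableSpace (X i)]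
  {μ : ∀ i, Measure (X i)} [∀ i, IsProbabilityMeasure (μ i)]

theorem MeasureTheory.Measure.pi_inter_eq_mul_of_dependsOn {s : Set ι} {A B : Set (∀ i, X i)}
    (hA : MeasurableSet A) (hB : MeasurableSet B)
    (hAs : DependsOn (· ∈ A) s) (hBs : DependsOn (· ∈ B) sᶜ) :
    Measure.pi μ (A ∩ B) = Measure.pi μ A * Measure.pi μ B := by
  classical
  have := fun i => nonempty_of_isProbabilityMeasure (μ i)
  -- Freezing the coordinates outside `s` at a base point `x₀` exhibits `A` as a cylinder over `s`.
  let x₀ : ∀ i, X i := fun _ => Classical.arbitrary _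
  let π := MeasurableEquiv.piEquivPiSubtypeProd X (· ∈ s)
  let A' := {y | π.symm (y, (π x₀).2) ∈ A}
  let B' := {z | π.symm ((π x₀).1, z) ∈ B}
  have hA' : A = π ⁻¹' (A' ×ˢ univ) := by
    ext ω
    refine (eq_iff_iff.mp (hAs (y := π.symm ((π ω).1, (π x₀).2)) fun i hi => ?_)).trans ?_
    · simp [π, hi]
    · simp [A']
  have hB' : B = π ⁻¹' (univ ×ˢ B') := by
    ext ω
    refine (eq_iff_iff.mp (hBs (y := π.symm ((π x₀).1, (π ω).2)) fun i hi => ?_)).trans ?_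
    · simp [π, show i ∉ s from hi]
    · simp [B']
  have hmA' : MeasurableSet A' := hA.preimage (by fun_prop)
  have hmB' : MeasurableSet B' := hB.preimage (by fun_prop)
  have hπ := measurePreserving_piEquivPiSubtypeProd μ (· ∈ s)
  have hAB : A ∩ B = π ⁻¹' (A' ×ˢ B') := by
    rw [hA', hB', ← preimage_inter, prod_inter_prod, inter_univ, univ_inter]
  rw [hAB, hA', hB', hπ.measure_preimage (hmA'.prod hmB').nullMeasurableSet,
    hπ.measure_preimage (hmA'.prod .univ).nullMeasurableSet,
    hπ.measure_preimage (MeasurableSet.univ.prod hmB').nullMeasurableSet]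
  simp [Measure.prod_prod]

theorem MeasureTheory.Measure.pi_biInter_eq_prod_of_dependsOn {κ : Type*} {T : Finset κ}
    {B : κ → Set ι} {E : κ → Set (∀ i, X i)} (hBT : (T : Set κ).PairwiseDisjoint B)
    (hE : ∀ v ∈ T, MeasurableSet (E v)) (hEB : ∀ v ∈ T, DependsOn (· ∈ E v) (B v)) :
    Measure.pi μ (⋂ v ∈ T, E v) = ∏ v ∈ T, Measure.pi μ (E v) := by
  classical
  induction T using Finset.induction_on with
  | empty => simp
  | insert w T hwT ih =>
    simp only [Finset.forall_mem_insert] at hE hEB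
    rw [Finset.coe_insert] at hBT
    have hrest : DependsOn (· ∈ ⋂ v ∈ T, E v) (B w)ᶜ := by
      intro x y hxy
      simp only [mem_iInter₂, eq_iff_iff]
      refine forall₂_congr fun v hv => eq_iff_iff.mp (hEB.2 v hv fun i hi => hxy i ?_)
      have hwv : w ≠ v := fun h => hwT (h ▸ hv)
      exact disjoint_right.mp (hBT (mem_insert w _) (mem_insert_of_mem _ hv) hwv) hi
    rw [Finset.set_biInter_insert, Finset.prod_insert hwT,
      Measure.pi_inter_eq_mul_of_dependsOn hE.1 (T.measurableSet_biInter hE.2) hEB.1 hrest,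
      ih (hBT.subset (subset_insert _ _)) hE.2 hEB.2]

end ProductMeasure

section RandomGraph

open Finset

instance : IsProbabilityMeasure unif :=
  ⟨by simp [unif, Real.volume_Icc]⟩

instance (n : ℕ) : IsProbabilityMeasure (Pn n) := by
  unfold Pn; infer_instance

theorem Sym2.eq_or_eq_or_eq_of_mem {α : Type*} {z : Sym2 α} {a b c : α}
    (ha : a ∈ z) (hb : b ∈ z) (hc : c ∈ z) : a = b ∨ a = c ∨ b = c := by
  induction z using Sym2.ind with
  | h x y =>
    simp only [Sym2.mem_iff] at ha hb hc
    rcases ha with rfl | rfl <;> rcases hb with rfl | rfl <;> rcases hc with rfl | rfl <;> simp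

variable {n : ℕ}

def EdgeIdx.ofNe {i j : Fin n} (h : i ≠ j) : EdgeIdx n :=
  ⟨s(i, j), Sym2.mk_isDiag_iff.not.mpr h⟩

theorem eV_of_ne (ω : EdgeIdx n → ℝ) {i j : Fin n} (h : i ≠ j) : eV ω i j = ω (EdgeIdx.ofNe h) :=
  dif_neg h

theorem eV_comm (ω : EdgeIdx n → ℝ) (i j : Fin n) : eV ω i j = eV ω j i := by
  rcases eq_or_ne i j with rfl | h
  · rfl
  · rw [eV_of_ne ω h, eV_of_ne ω h.symm]
    exact congrArg ω (Subtype.ext Sym2.eq_swap)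

theorem eV_congr {ω ω' : EdgeIdx n → ℝ} {i j : Fin n}
    (h : ∀ e : EdgeIdx n, i ∈ e.1 → j ∈ e.1 → ω e = ω' e) : eV ω i j = eV ω' i j := by
  rcases eq_or_ne i j with rfl | hij
  · simp [eV]
  · rw [eV_of_ne ω hij, eV_of_ne ω' hij]
    exact h _ (Sym2.mem_mk_left _ _) (Sym2.mem_mk_right _ _)

theorem measurable_eV (i j : Fin n) : Measurable fun ω : EdgeIdx n → ℝ => eV ω i j := by
  rcases eq_or_ne i j with rfl | h
  · simp [eV]
  · simpa only [eV_of_ne _ h] using measurable_pi_apply _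

theorem Pn_eV_le {i j : Fin n} (hij : i ≠ j) {t : ℝ} (ht1 : t ≤ 1) :
    Pn n {ω | eV ω i j ≤ t} = ENNReal.ofReal t := by
  have hset : {ω : EdgeIdx n → ℝ | eV ω i j ≤ t} =
      Function.eval (EdgeIdx.ofNe hij) ⁻¹' Set.Iic t := by
    ext ω; simp [eV_of_ne _ hij]
  rw [hset, Pn, (measurePreserving_eval _ _).measure_preimage measurableSet_Iic.nullMeasurableSet,
    unif, Measure.restrict_apply measurableSet_Iic, Set.inter_comm, ← Set.Ici_inter_Iic,
    Set.inter_assoc, Set.Iic_inter_Iic, min_eq_right ht1, Set.Ici_inter_Iic, Real.volume_Icc,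
    sub_zero]

def adjToAll (σ : Finset (Fin n)) (t : ℝ) (v : Fin n) : Set (EdgeIdx n → ℝ) :=
  {ω | ∀ i ∈ σ, eV ω v i ≤ t}

def edgesBetween (v : Fin n) (σ : Finset (Fin n)) : Set (EdgeIdx n) :=
  {e | v ∈ e.1 ∧ ∃ i ∈ σ, i ∈ e.1}

theorem measurableSet_adjToAll (σ : Finset (Fin n)) (t : ℝ) (v : Fin n) :
    MeasurableSet (adjToAll σ t v) := by
  simp only [adjToAll, Set.ofPred_forall]
  exact σ.measurableSet_biInter fun i _ => measurableSet_le (measurable_eV v i) measurable_const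

theorem dependsOn_adjToAll (σ : Finset (Fin n)) (t : ℝ) (v : Fin n) :
    DependsOn (· ∈ adjToAll σ t v) (edgesBetween v σ) := by
  intro ω ω' h
  simp only [adjToAll, Set.mem_ofPred_eq, eq_iff_iff]
  refine forall₂_congr fun i hi => ?_
  rw [eV_congr fun e hv hi' => h e ⟨hv, i, hi, hi'⟩]

theorem Pn_adjToAll (σ : Finset (Fin n)) {t : ℝ} (ht1 : t ≤ 1) {v : Fin n}
    (hv : v ∉ σ) : Pn n (adjToAll σ t v) = ENNReal.ofReal t ^ σ.card := by
  have hσ : adjToAll σ t v = ⋂ i ∈ σ, adjToAll {i} t v := by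
    ext ω; simp [adjToAll]
  have hdisj : (σ : Set (Fin n)).PairwiseDisjoint fun i => edgesBetween v {i} := by
    intro i hi j hj hij
    refine Set.disjoint_left.mpr fun e ⟨hve, _, hi', hie⟩ ⟨_, _, hj', hje⟩ => ?_
    rw [Finset.mem_singleton] at hi' hj'
    subst hi' hj'
    rcases Sym2.eq_or_eq_or_eq_of_mem hve hie hje with rfl | rfl | rfl
    · exact hv hi
    · exact hv hj
    · exact hij rfl
  rw [hσ, Pn, Measure.pi_biInter_eq_prod_of_dependsOn hdisj
    (fun i _ => measurableSet_adjToAll _ t v) (fun i _ => dependsOn_adjToAll _ t v),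
    ← Finset.prod_const]
  refine Finset.prod_congr rfl fun i hi => ?_
  change Pn n _ = _
  simpa [adjToAll] using Pn_eV_le (ne_of_mem_of_not_mem hi hv).symm ht1

theorem Pn_biInter_compl_adjToAll (σ : Finset (Fin n)) {t : ℝ} (ht1 : t ≤ 1)
    {T : Finset (Fin n)} (hT : Disjoint T σ) :
    Pn n (⋂ v ∈ T, (adjToAll σ t v)ᶜ) = (1 - ENNReal.ofReal t ^ σ.card) ^ T.card := by
  have hdisj : (T : Set (Fin n)).PairwiseDisjoint fun v => edgesBetween v σ := by
    intro v hv w hw hvw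
    refine Set.disjoint_left.mpr fun e ⟨hve, i, hi, hie⟩ ⟨hwe, _⟩ => ?_
    rcases Sym2.eq_or_eq_or_eq_of_mem hve hwe hie with rfl | rfl | rfl
    · exact hvw rfl
    · exact Finset.disjoint_left.mp hT hv hi
    · exact Finset.disjoint_left.mp hT hw hi
  rw [Pn, Measure.pi_biInter_eq_prod_of_dependsOn hdisj
    (fun v _ => (measurableSet_adjToAll σ t v).compl)
    (fun v _ _ _ h => congrArg Not (dependsOn_adjToAll σ t v h)), ← Finset.prod_const]
  refine Finset.prod_congr rfl fun v hv => ?_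
  change Pn n _ = _
  rw [prob_compl_eq_one_sub (measurableSet_adjToAll σ t v),
    Pn_adjToAll σ ht1 (Finset.disjoint_left.mp hT hv)]

end RandomGraph

section RStarBound

open Finset

theorem Finset.exists_subset_card_eq_sub_forall_not {α : Type*} {s : Finset α} {p : α → Prop}
    [DecidablePred p] {m : ℕ} (h : #{a ∈ s | p a} ≤ m) :
    ∃ t ⊆ s, #t = #s - m ∧ ∀ a ∈ t, ¬ p a := by
  have hs := card_filter_add_card_filter_not (s := s) p
  obtain ⟨t, hts, ht⟩ := exists_subset_card_eq (s := {a ∈ s | ¬ p a}) (n := #s - m)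
    (Nat.sub_le_of_le_add (by linarith))
  exact ⟨t, hts.trans (filter_subset _ _), ht, fun a ha => (mem_filter.1 (hts ha)).2⟩

variable {n : ℕ}

theorem IsClique.insert {ω : EdgeIdx n → ℝ} {s : ℝ} {σ : Finset (Fin n)} {v : Fin n}
    (hσ : IsClique ω s σ) (hv : ∀ i ∈ σ, eV ω v i ≤ s) : IsClique ω s (insert v σ) := by
  intro a ha b hb hab
  obtain rfl | ha' := mem_insert.1 ha <;> obtain rfl | hb' := mem_insert.1 hb
  · exact absurd rfl hab
  · exact hv b hb'
  · rw [eV_comm]; exact hv a ha'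
  · exact hσ a ha' b hb' hab

theorem exists_powersetCard_forall_not_mem_adjToAll {ω : EdgeIdx n → ℝ} {k m : ℕ} {t s : ℝ}
    {σ : Finset (Fin n)} (hσk : #σ = k) (hts : t ≤ s) (hσ : IsClique ω s σ)
    (hm : Nat.card {v : Fin n // v ∉ σ ∧ IsClique ω s (insert v σ)} ≤ m) :
    ∃ T ∈ powersetCard (n - k - m) (univ \ σ), ∀ v ∈ T, ω ∉ adjToAll σ t v := by
  classical
  have hcard : #{v ∈ univ \ σ | ω ∈ adjToAll σ t v} ≤ m := by
    refine le_trans ?_ hm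
    rw [Nat.card_eq_fintype_card, Fintype.card_subtype]
    refine card_le_card fun v hv => ?_
    obtain ⟨hvσ, hωv⟩ := mem_filter.1 hv
    exact mem_filter.2
      ⟨mem_univ _, (mem_sdiff.1 hvσ).2, hσ.insert fun i hi => (hωv i hi).trans hts⟩
  obtain ⟨T, hTσ, hT, hωT⟩ := exists_subset_card_eq_sub_forall_not hcard
  rw [card_univ_sdiff, Fintype.card_fin, hσk] at hT
  exact ⟨T, mem_powersetCard.2 ⟨hTσ, hT⟩, hωT⟩

theorem RStar_le_sum_indicator (k m : ℕ) (t : ℝ) (ω : EdgeIdx n → ℝ) :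
    (RStar k m t ω : ℝ) ≤ ∑ σ ∈ powersetCard k univ, ∑ T ∈ powersetCard (n - k - m) (univ \ σ),
      (⋂ v ∈ T, (adjToAll σ t v)ᶜ).indicator 1 ω := by
  classical
  rw [RStar, Nat.card_eq_fintype_card, Fintype.card_subtype, ← filter_filter,
    univ_filter_card_eq, card_filter, Nat.cast_sum]
  refine sum_le_sum fun σ hσ => ?_
  have hind : ∀ T ∈ powersetCard (n - k - m) (univ \ σ),
      0 ≤ (⋂ v ∈ T, (adjToAll σ t v)ᶜ).indicator (1 : (EdgeIdx n → ℝ) → ℝ) ω :=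
    fun T _ => Set.indicator_nonneg (fun _ _ => zero_le_one) _
  split_ifs with h
  · obtain ⟨s, hts, -, hσs, hm⟩ := h
    obtain ⟨T, hT, hωT⟩ :=
      exists_powersetCard_forall_not_mem_adjToAll (mem_powersetCard_univ.1 hσ) hts hσs hm
    refine le_trans ?_ (single_le_sum hind hT)
    rw [Set.indicator_of_mem (Set.mem_iInter₂.2 hωT)]
    simp
  · exact_mod_cast sum_nonneg hind

theorem integral_RStar_le (k m : ℕ) {t : ℝ} (ht0 : 0 ≤ t) (ht1 : t ≤ 1) :
    ∫ ω, (RStar k m t ω : ℝ) ∂Pn n ≤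
      n.choose k * (n - k).choose (n - k - m) * (1 - t ^ k) ^ (n - k - m) := by
  have hmeas (σ T : Finset (Fin n)) : MeasurableSet (⋂ v ∈ T, (adjToAll σ t v)ᶜ) :=
    T.measurableSet_biInter fun v _ => (measurableSet_adjToAll σ t v).compl
  have hprob : ∀ σ ∈ powersetCard k univ, ∀ T ∈ powersetCard (n - k - m) (univ \ σ),
      (Pn n).real (⋂ v ∈ T, (adjToAll σ t v)ᶜ) = (1 - t ^ k) ^ (n - k - m) := by
    intro σ hσ T hT
    rw [mem_powersetCard_univ] at hσ
    rw [mem_powersetCard] at hT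
    have htk : ENNReal.ofReal t ^ k ≤ 1 := pow_le_one₀ (by positivity) (ENNReal.ofReal_le_one.2 ht1)
    rw [measureReal_def,
      Pn_biInter_compl_adjToAll σ ht1 (disjoint_of_subset_left hT.1 sdiff_disjoint), hσ, hT.2,
      ENNReal.toReal_pow, ENNReal.toReal_sub_of_le htk ENNReal.one_ne_top,
      ENNReal.toReal_pow, ENNReal.toReal_ofReal ht0, ENNReal.toReal_one]
  calc ∫ ω, (RStar k m t ω : ℝ) ∂Pn n
      ≤ ∫ ω, ∑ σ ∈ powersetCard k univ, ∑ T ∈ powersetCard (n - k - m) (univ \ σ),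
          (⋂ v ∈ T, (adjToAll σ t v)ᶜ).indicator 1 ω ∂Pn n :=
        integral_mono_of_nonneg (.of_forall fun ω => Nat.cast_nonneg _)
          (integrable_finsetSum _ fun σ _ => integrable_finsetSum _ fun T _ =>
            (integrable_const 1).indicator (hmeas σ T))
          (.of_forall (RStar_le_sum_indicator k m t))
    _ = ∑ σ ∈ powersetCard k univ, ∑ T ∈ powersetCard (n - k - m) (univ \ σ),
          (Pn n).real (⋂ v ∈ T, (adjToAll σ t v)ᶜ) := by
        rw [integral_finsetSum _ fun σ _ => integrable_finsetSum _ fun T _ =>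
          (integrable_const 1).indicator (hmeas σ T)]
        refine sum_congr rfl fun σ _ => ?_
        rw [integral_finsetSum _ fun T _ => (integrable_const 1).indicator (hmeas σ T)]
        exact sum_congr rfl fun T _ => integral_indicator_one (hmeas σ T)
    _ = n.choose k * (n - k).choose (n - k - m) * (1 - t ^ k) ^ (n - k - m) := by
        rw [sum_congr rfl fun σ hσ => (sum_congr rfl (hprob σ hσ)).trans (by
          rw [sum_const, card_powersetCard, card_univ_sdiff, Fintype.card_fin,
            mem_powersetCard_univ.1 hσ, nsmul_eq_mul]),
          sum_const, card_powersetCard, card_univ, Fintype.card_fin, nsmul_eq_mul, mul_assoc]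

end RStarBound

section Asymptotics

open Filter Topology Real

noncomputable def tcNumerator (k : ℕ) (c x : ℝ) : ℝ :=
  ((k : ℝ) / 2 + 1) * log x + ((k : ℝ) / 2) * log (log x) + c

theorem tc_eq (k : ℕ) (c : ℝ) (n : ℕ) :
    tc k c n = (tcNumerator k c n / n) ^ ((1 : ℝ) / (k + 1)) :=
  rfl

theorem tendsto_tcNumerator_atTop (k : ℕ) (c : ℝ) : Tendsto (tcNumerator k c) atTop atTop := by
  have hloglog : ∀ᶠ x : ℝ in atTop, 0 ≤ log (log x) :=
    (tendsto_log_atTop.comp tendsto_log_atTop).eventually_ge_atTop 0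
  exact tendsto_atTop_add_const_right _ c <| tendsto_atTop_mono'
    _ (hloglog.mono fun x hx => le_add_of_nonneg_right (by positivity))
    (tendsto_log_atTop.const_mul_atTop (by positivity))

theorem isLittleO_tcNumerator_id (k : ℕ) (c : ℝ) : tcNumerator k c =o[atTop] id :=
  ((isLittleO_log_id_atTop.const_mul_left _).add
    (((isLittleO_log_id_atTop.comp_tendsto tendsto_log_atTop).trans
      isLittleO_log_id_atTop).const_mul_left _)).add (Asymptotics.isLittleO_const_id_atTop c)

theorem eventually_inv_rpow_le_tc_and_tc_le_one (k : ℕ) (c : ℝ) :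
    ∀ᶠ n : ℕ in atTop, ((n : ℝ) ^ ((1 : ℝ) / (k + 1)))⁻¹ ≤ tc k c n ∧ tc k c n ≤ 1 := by
  have hbound : ∀ᶠ x : ℝ in atTop, 1 ≤ tcNumerator k c x ∧ tcNumerator k c x ≤ x := by
    filter_upwards [(tendsto_tcNumerator_atTop k c).eventually_ge_atTop 1,
      (isLittleO_tcNumerator_id k c).bound one_pos, eventually_ge_atTop 0] with x h1 h2 hx
    rw [one_mul, Real.norm_eq_abs, Real.norm_eq_abs, id, abs_of_nonneg hx] at h2
    exact ⟨h1, (le_abs_self _).trans h2⟩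
  filter_upwards [tendsto_natCast_atTop_atTop.eventually hbound, eventually_gt_atTop 0]
    with n ⟨h1, h2⟩ hn
  have hn' : (0 : ℝ) < n := Nat.cast_pos.2 hn
  have hε : (0 : ℝ) ≤ 1 / (k + 1) := by positivity
  rw [← Real.inv_rpow hn'.le, tc_eq]
  exact ⟨Real.rpow_le_rpow (inv_nonneg.2 hn'.le)
      (by rw [inv_eq_one_div]; exact div_le_div_of_nonneg_right h1 hn'.le) hε,
    Real.rpow_le_one (div_nonneg (by linarith) hn'.le) ((div_le_one hn').2 h2) hε⟩

theorem choose_mul_choose_mul_one_sub_pow_le {n k m : ℕ} {a t : ℝ} (hn : 2 * (k + m) ≤ n)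
    (ha : 0 < a) (hna : a ^ (k + 1) = n) (hat : a⁻¹ ≤ t) (ht : t ≤ 1) :
    (n.choose k : ℝ) * (n - k).choose (n - k - m) * (1 - t ^ k) ^ (n - k - m) ≤
      a ^ ((k + 1) * (k + m)) * exp (-(a / 2)) := by
  have ht0 : 0 ≤ t := (inv_nonneg.2 ha.le).trans hat
  have htk : 0 ≤ 1 - t ^ k := sub_nonneg.2 (pow_le_one₀ ht0 ht)
  have hchoose : (n.choose k : ℝ) * (n - k).choose (n - k - m) ≤ a ^ ((k + 1) * (k + m)) := by
    rw [pow_mul, hna, pow_add, Nat.choose_symm (by omega : m ≤ n - k)]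
    gcongr
    · exact_mod_cast n.choose_le_pow k
    · exact_mod_cast ((n - k).choose_le_pow m).trans (Nat.pow_le_pow_left (n.sub_le k) m)
  have hlin : a / 2 ≤ (n - k - m : ℕ) * t ^ k := by
    have hcast : ((n - k - m : ℕ) : ℝ) = n - k - m := by
      rw [Nat.sub_sub, Nat.cast_sub (by omega), Nat.cast_add]; ring
    have h1 : (n : ℝ) / 2 ≤ (n - k - m : ℕ) := by
      have hn' : 2 * ((k : ℝ) + m) ≤ n := by exact_mod_cast hn
      rw [hcast]; linarith
    have h2 : (a ^ k)⁻¹ ≤ t ^ k := by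
      rw [← inv_pow]; exact pow_le_pow_left₀ (inv_nonneg.2 ha.le) hat k
    calc a / 2 = (n : ℝ) / 2 * (a ^ k)⁻¹ := by rw [← hna]; field_simp; ring
      _ ≤ _ := mul_le_mul h1 h2 (inv_nonneg.2 (pow_nonneg ha.le k)) (Nat.cast_nonneg _)
  calc (n.choose k : ℝ) * (n - k).choose (n - k - m) * (1 - t ^ k) ^ (n - k - m)
      ≤ a ^ ((k + 1) * (k + m)) * exp (-t ^ k) ^ (n - k - m) :=
        mul_le_mul hchoose (pow_le_pow_left₀ htk (one_sub_le_exp_neg _) _) (pow_nonneg htk _)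
          (pow_nonneg ha.le _)
    _ = a ^ ((k + 1) * (k + m)) * exp (-((n - k - m : ℕ) * t ^ k)) := by
        rw [← Real.exp_nat_mul, mul_neg]
    _ ≤ a ^ ((k + 1) * (k + m)) * exp (-(a / 2)) := by gcongr

theorem tendsto_choose_mul_choose_mul_one_sub_pow (k m : ℕ) {t : ℕ → ℝ}
    (ht : ∀ᶠ n : ℕ in atTop, ((n : ℝ) ^ ((1 : ℝ) / (k + 1)))⁻¹ ≤ t n ∧ t n ≤ 1) :
    Tendsto (fun n : ℕ => (n.choose k : ℝ) * (n - k).choose (n - k - m) *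
      (1 - t n ^ k) ^ (n - k - m)) atTop (𝓝 0) := by
  set a : ℕ → ℝ := fun n => (n : ℝ) ^ ((1 : ℝ) / (k + 1))
  have hlim : Tendsto (fun n => a n ^ ((k + 1) * (k + m)) * exp (-(a n / 2))) atTop (𝓝 0) := by
    refine ((tendsto_rpow_mul_exp_neg_mul_atTop_nhds_zero ((k + 1) * (k + m) : ℕ) (1 / 2)
      one_half_pos).comp ((tendsto_rpow_atTop (one_div_pos.2 k.cast_add_one_pos)).comp
        tendsto_natCast_atTop_atTop)).congr fun n => ?_
    simp only [Function.comp, Real.rpow_natCast, a]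
    ring_nf
  refine squeeze_zero' ?_ ?_ hlim
  · filter_upwards [ht] with n ⟨hlow, hup⟩
    have h0 : 0 ≤ t n := (inv_nonneg.2 (Real.rpow_nonneg n.cast_nonneg _)).trans hlow
    have : 0 ≤ 1 - t n ^ k := sub_nonneg.2 (pow_le_one₀ h0 hup)
    positivity
  · filter_upwards [ht, eventually_ge_atTop (2 * (k + m)), eventually_gt_atTop 0]
      with n ⟨hlow, hup⟩ hn hn0
    refine choose_mul_choose_mul_one_sub_pow_le hn (Real.rpow_pos_of_pos (Nat.cast_pos.2 hn0) _)
      ?_ hlow hup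
    rw [show a n = (n : ℝ) ^ ((k + 1 : ℕ) : ℝ)⁻¹ by simp [a],
      Real.rpow_inv_natCast_pow n.cast_nonneg k.succ_ne_zero]

end Asymptotics

theorem expectation_RStar_tendsto_zero_general (k m : ℕ) (c : ℝ) :
    Filter.Tendsto
      (fun n : ℕ => ∫ ω, (RStar k m (tc k c n) ω : ℝ) ∂ Pn n)
      Filter.atTop (nhds 0) := by
  have htc := eventually_inv_rpow_le_tc_and_tc_le_one k c
  refine squeeze_zero' (.of_forall fun n => integral_nonneg fun ω => Nat.cast_nonneg _) ?_
    (tendsto_choose_mul_choose_mul_one_sub_pow k m htc)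
  filter_upwards [htc] with n ⟨hlow, hup⟩
  exact integral_RStar_le k m ((inv_nonneg.2 (Real.rpow_nonneg n.cast_nonneg _)).trans hlow) hup

/-- For fixed `k ≥ 1`, `m ≥ 0` and `c ∈ ℝ`,
`E[R*_{k−1,m}(t_c(k,n))] → 0` as `n → ∞`. -/
theorem expectation_RStar_tendsto_zero (k m : ℕ) (hk : 1 ≤ k) (c : ℝ) :
    Filter.Tendsto
      (fun n : ℕ => ∫ ω, (RStar k m (tc k c n) ω : ℝ) ∂ Pn n)
      Filter.atTop (nhds 0) :=
  expectation_RStar_tendsto_zero_general k m c
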